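/- Under the assumptions (F0), (L1)–(L3), (LUGC) of the paper (sublinear dynamics, quadratic growth and uniform convexity of L in u, existence of a compact attractor set K with inf_{x∉K} L(x,u*) ≥ Θ + min_{x∈K} L(x,u*), an equilibrium f(x*,u*)=0 at a minimizer x*, and local uniform global controllability), there exists a real constant α(L) (the critical or Mañé constant) such that for every R > 0, sup_{x ∈ B̄_R} |V_T(x)/T − α(L)| → 0 as T → ∞, where V_T(x) = inf_{(γ,u), γ(0)=x} ∫₀^T L(γ,u) dt. -/

import Mathlib

open MeasureTheory Set Filter
open Metric Topology
open scoped ENNReal NNReal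
set_option linter.unusedSectionVars false
set_option maxHeartbeats 1000000

noncomputable section

/-- A trajectory–control pair for the control system `γ' = f(γ,u)` on `[a,b]`,
in integral (absolutely continuous) form, with square-integrable control. -/
def IsPair {d m : ℕ}
    (f : EuclideanSpace ℝ (Fin d) → EuclideanSpace ℝ (Fin m) → EuclideanSpace ℝ (Fin d))
    (a b : ℝ) (γ : ℝ → EuclideanSpace ℝ (Fin d)) (u : ℝ → EuclideanSpace ℝ (Fin m)) :
    Prop :=
  (∀ s ∈ Set.Icc a b, γ s = γ a + ∫ τ in a..s, f (γ τ) (u τ)) ∧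
    IntervalIntegrable (fun s => ‖u s‖ ^ 2) volume a b

/-- The finite-horizon free-endpoint value function. -/
def valueFn {d m : ℕ}
    (f : EuclideanSpace ℝ (Fin d) → EuclideanSpace ℝ (Fin m) → EuclideanSpace ℝ (Fin d))
    (L : EuclideanSpace ℝ (Fin d) → EuclideanSpace ℝ (Fin m) → ℝ)
    (T : ℝ) (x : EuclideanSpace ℝ (Fin d)) : ℝ :=
  sInf {c : ℝ | ∃ γ u, IsPair f 0 T γ u ∧ γ 0 = x ∧
    IntervalIntegrable (fun s => L (γ s) (u s)) volume 0 T ∧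
    c = ∫ s in (0:ℝ)..T, L (γ s) (u s)}

namespace Stmt5Sel

variable {α : Type*} [MeasurableSpace α]
variable {E : Type*} [NormedAddCommGroup E] [NormedSpace ℝ E] [ProperSpace E]
  [MeasurableSpace E] [BorelSpace E]
variable {F : Type*} [MetricSpace F] [MeasurableSpace F] [OpensMeasurableSpace F]
  [SecondCountableTopology F]

/-- Saturation (radial retraction) onto the closed unit ball. -/
def sat (v : E) : E := (max 1 ‖v‖)⁻¹ • v

lemma continuous_sat : Continuous (sat (E := E)) := by
  apply Continuous.smul
  · exact (continuous_const.max continuous_norm).inv₀ fun x => by positivity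
  · exact continuous_id

lemma sat_eq {v : E} (h : ‖v‖ ≤ 1) : sat v = v := by
  simp [sat, max_eq_left h]

lemma norm_sat_le (v : E) : ‖sat v‖ ≤ 1 := by
  have h1 : (0:ℝ) < max 1 ‖v‖ := lt_of_lt_of_le one_pos (le_max_left _ _)
  have : ‖sat v‖ = (max 1 ‖v‖)⁻¹ * ‖v‖ := by
    simp [sat, norm_smul, abs_of_pos (inv_pos.2 h1)]
  rw [this]
  calc (max 1 ‖v‖)⁻¹ * ‖v‖ ≤ (max 1 ‖v‖)⁻¹ * (max 1 ‖v‖) :=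
        mul_le_mul_of_nonneg_left (le_max_right _ _) (inv_pos.2 h1).le
    _ = 1 := inv_mul_cancel₀ h1.ne'

/-- A dense sequence in the closed ball `closedBall c r`. -/
def ballSeq (q : ℕ → E) (c : E) (r : ℝ) (i : ℕ) : E := c + r • sat (q i)

lemma ballSeq_mem (q : ℕ → E) (c : E) {r : ℝ} (hr : 0 ≤ r) (i : ℕ) :
    ballSeq q c r i ∈ closedBall c r := by
  rw [mem_closedBall, dist_eq_norm]
  simp only [ballSeq, add_sub_cancel_left, norm_smul, Real.norm_eq_abs, abs_of_nonneg hr]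
  calc r * ‖sat (q i)‖ ≤ r * 1 := mul_le_mul_of_nonneg_left (norm_sat_le _) hr
    _ = r := mul_one r

lemma ballSeq_dense {q : ℕ → E} (hq : DenseRange q) (c : E) {r : ℝ} (hr : 0 < r)
    {w : E} (hw : w ∈ closedBall c r) {δ : ℝ} (hδ : 0 < δ) :
    ∃ i, dist (ballSeq q c r i) w < δ := by
  set v : E := r⁻¹ • (w - c) with hv
  have hvn : ‖v‖ ≤ 1 := by
    rw [hv, norm_smul, Real.norm_eq_abs, abs_of_pos (inv_pos.2 hr)]
    rw [mem_closedBall, dist_eq_norm] at hw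
    calc r⁻¹ * ‖w - c‖ ≤ r⁻¹ * r := mul_le_mul_of_nonneg_left hw (inv_pos.2 hr).le
      _ = 1 := inv_mul_cancel₀ hr.ne'
  have hψ : Continuous fun z : E => c + r • sat z :=
    continuous_const.add (continuous_const.smul continuous_sat)
  have hψv : c + r • sat v = w := by
    rw [sat_eq hvn, hv, smul_smul, mul_inv_cancel₀ hr.ne', one_smul, add_sub_cancel]
  obtain ⟨δ', hδ', hball⟩ := Metric.continuousAt_iff.1 (hψ.continuousAt (x := v)) δ hδ
  obtain ⟨i, hi⟩ := hq.exists_dist_lt v hδ'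
  refine ⟨i, ?_⟩
  have := hball (x := q i) (by rwa [dist_comm] at hi)
  rwa [hψv] at this

/-- Characterisation of "the closed ball `closedBall c r` meets `{w | Φ w = g}`"
through a countable infimum. -/
lemma hit_iff {Φ : E → F} (hΦ : Continuous Φ) (g : F) {q : ℕ → E} (hq : DenseRange q)
    (c : E) {r : ℝ} (hr : 0 < r) :
    (⨅ i, edist (Φ (ballSeq q c r i)) g) = 0 ↔ ∃ w, dist w c ≤ r ∧ Φ w = g := by
  constructor
  · intro h
    have hlt : ∀ k : ℕ, ∃ i, edist (Φ (ballSeq q c r i)) g < ENNReal.ofReal ((1:ℝ)/(k+1)) := by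
      intro k
      have : (0:ℝ≥0∞) < ENNReal.ofReal ((1:ℝ)/(k+1)) := by
        rw [ENNReal.ofReal_pos]; positivity
      rw [← h] at this
      exact iInf_lt_iff.1 this
    choose I hI using hlt
    set w : ℕ → E := fun k => ballSeq q c r (I k) with hwdef
    have hwmem : ∀ k, w k ∈ closedBall c r := fun k => ballSeq_mem q c hr.le _
    obtain ⟨a, ha_mem, ψ, hψmono, hψt⟩ :=
      (isCompact_closedBall c r).tendsto_subseq hwmem
    have h1 : Tendsto (fun k => Φ (w (ψ k))) atTop (𝓝 (Φ a)) :=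
      (hΦ.tendsto a).comp hψt
    have h2 : Tendsto (fun k => Φ (w k)) atTop (𝓝 g) := by
      rw [tendsto_iff_dist_tendsto_zero]
      have hb : ∀ k, dist (Φ (w k)) g ≤ (1:ℝ)/(k+1) := by
        intro k
        have := hI k
        rw [edist_dist] at this
        have h0 : (0:ℝ) ≤ (1:ℝ)/(k+1) := by positivity
        exact ((ENNReal.ofReal_lt_ofReal_iff_of_nonneg dist_nonneg).1 this).le
      refine squeeze_zero (fun k => dist_nonneg) hb ?_
      exact tendsto_one_div_add_atTop_nhds_zero_nat
    have h3 : Tendsto (fun k => Φ (w (ψ k))) atTop (𝓝 g) :=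
      h2.comp hψmono.tendsto_atTop
    exact ⟨a, by simpa [dist_comm] using mem_closedBall.1 ha_mem, tendsto_nhds_unique h1 h3⟩
  · rintro ⟨w, hw, hΦw⟩
    refine le_antisymm ?_ (by simp)
    refine ENNReal.le_of_forall_pos_le_add fun ε hε _ => ?_
    obtain ⟨δ', hδ', hball⟩ := Metric.continuousAt_iff.1 (hΦ.continuousAt (x := w)) (ε := ε)
      (by exact_mod_cast hε)
    obtain ⟨i, hi⟩ := ballSeq_dense hq c hr (mem_closedBall.2 (by rwa [dist_comm] at hw)) hδ'
    calc (⨅ i, edist (Φ (ballSeq q c r i)) g) ≤ edist (Φ (ballSeq q c r i)) g := iInf_le _ i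
      _ = ENNReal.ofReal (dist (Φ (ballSeq q c r i)) g) := edist_dist _ _
      _ ≤ ENNReal.ofReal ε := by
          apply ENNReal.ofReal_le_ofReal
          rw [← hΦw]
          exact (hball hi).le
      _ = (ε : ℝ≥0∞) := ENNReal.ofReal_coe_nnreal
      _ ≤ 0 + ε := by simp


/-! ### Totalized `Nat.find` -/

lemma totFind_ex (C : ℕ → Prop) : ∃ n, C n ∨ (n = 0 ∧ ¬∃ k, C k) := by
  classical
  by_cases h : ∃ k, C k
  · obtain ⟨k, hk⟩ := h; exact ⟨k, Or.inl hk⟩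
  · exact ⟨0, Or.inr ⟨rfl, h⟩⟩

open scoped Classical in
def totFind (C : ℕ → Prop) : ℕ := Nat.find (totFind_ex C)

lemma totFind_spec {C : ℕ → Prop} (h : ∃ k, C k) : C (totFind C) := by
  classical
  rcases Nat.find_spec (totFind_ex C) with h1 | h1
  · exact h1
  · exact absurd h h1.2

open scoped Classical in
lemma measurable_totFind {C : α → ℕ → Prop} (h : ∀ n, MeasurableSet {t | C t n}) :
    Measurable fun t => totFind (C t) := by
  refine measurable_find (fun t => totFind_ex (C t)) fun k => ?_
  have : {t | C t k ∨ (k = 0 ∧ ¬∃ j, C t j)} =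
      {t | C t k} ∪ ({t : α | k = 0} ∩ (⋃ j, {t | C t j})ᶜ) := by
    ext t; simp [Set.mem_iUnion]
  rw [this]
  exact (h k).union ((MeasurableSet.const _).inter
    ((MeasurableSet.iUnion fun j => h j).compl))

/-! ### The recursive approximate selection -/

variable (Φ : α → E → F) (G : α → F) (q : ℕ → E)

def Good (t : α) : Prop := ∃ w, Φ t w = G t

def krnB (n : ℕ) (r : ℝ) : Set α :=
  {t | (⨅ i, edist (Φ t (ballSeq q (q n) r i)) (G t)) = 0}

lemma krnB_meas (hm : ∀ w, Measurable fun t => Φ t w) (hG : Measurable G) (n : ℕ) (r : ℝ) :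
    MeasurableSet (krnB Φ G q n r) := by
  have h : Measurable fun t => ⨅ i, edist (Φ t (ballSeq q (q n) r i)) (G t) :=
    Measurable.iInf fun i => Measurable.edist (hm _) hG
  exact h (measurableSet_singleton 0)

lemma krnB_mem_iff (hc : ∀ t, Continuous (Φ t)) (hq : DenseRange q) {r : ℝ} (hr : 0 < r)
    {t : α} {n : ℕ} :
    t ∈ krnB Φ G q n r ↔ ∃ w, dist w (q n) ≤ r ∧ Φ t w = G t :=
  hit_iff (hc t) (G t) hq (q n) hr

def krnN : ℕ → α → ℕ
  | 0 => fun t => totFind fun n => t ∈ krnB Φ G q n 1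
  | (k+1) => fun t => totFind fun n =>
      t ∈ krnB Φ G q n ((1/2:ℝ)^(k+1)) ∧
      dist (q n) (q (krnN k t)) ≤ 3 * (1/2:ℝ)^(k+1)

lemma krnN_meas (hm : ∀ w, Measurable fun t => Φ t w) (hG : Measurable G) :
    ∀ k, Measurable (krnN Φ G q k) := by
  intro k
  induction k with
  | zero => exact measurable_totFind fun n => krnB_meas Φ G q hm hG n 1
  | succ k ih =>
    refine measurable_totFind fun n => ?_
    have h1 : MeasurableSet (krnB Φ G q n ((1/2:ℝ)^(k+1))) := krnB_meas Φ G q hm hG _ _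
    have hqm : Measurable fun t => q (krnN Φ G q k t) := measurable_from_top.comp ih
    have h2 : MeasurableSet {t | dist (q n) (q (krnN Φ G q k t)) ≤ 3 * (1/2:ℝ)^(k+1)} :=
      measurableSet_le (measurable_const.dist hqm) measurable_const
    exact h1.inter h2

lemma krnN_hit (hc : ∀ t, Continuous (Φ t)) (hq : DenseRange q) :
    ∀ (k : ℕ) (t : α), Good Φ G t → t ∈ krnB Φ G q (krnN Φ G q k t) ((1/2:ℝ)^k) := by
  intro k
  induction k with
  | zero =>
    rintro t ⟨w, hw⟩
    obtain ⟨n, hn⟩ := hq.exists_dist_lt w one_pos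
    have hex : ∃ n', t ∈ krnB Φ G q n' 1 :=
      ⟨n, (krnB_mem_iff Φ G q hc hq one_pos).2 ⟨w, hn.le, hw⟩⟩
    have := totFind_spec hex
    simpa [krnN, pow_zero] using this
  | succ k ih =>
    intro t hGt
    obtain ⟨w, hwd, hww⟩ := (krnB_mem_iff Φ G q hc hq (by positivity)).1 (ih t hGt)
    obtain ⟨n, hn⟩ := hq.exists_dist_lt w (show (0:ℝ) < (1/2:ℝ)^(k+1) by positivity)
    have hex : ∃ n', t ∈ krnB Φ G q n' ((1/2:ℝ)^(k+1)) ∧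
        dist (q n') (q (krnN Φ G q k t)) ≤ 3 * (1/2:ℝ)^(k+1) := by
      refine ⟨n, (krnB_mem_iff Φ G q hc hq (by positivity)).2 ⟨w, hn.le, hww⟩, ?_⟩
      calc dist (q n) (q (krnN Φ G q k t)) ≤ dist (q n) w + dist w (q (krnN Φ G q k t)) :=
            dist_triangle _ _ _
        _ ≤ (1/2:ℝ)^(k+1) + (1/2:ℝ)^k := add_le_add (by rw [dist_comm]; exact hn.le) hwd
        _ = 3 * (1/2:ℝ)^(k+1) := by ring
    have := totFind_spec hex
    simpa [krnN] using this.1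

lemma krnN_link (hc : ∀ t, Continuous (Φ t)) (hq : DenseRange q) (k : ℕ) (t : α)
    (hGt : Good Φ G t) :
    dist (q (krnN Φ G q (k+1) t)) (q (krnN Φ G q k t)) ≤ 3 * (1/2:ℝ)^(k+1) := by
  obtain ⟨w, hwd, hww⟩ := (krnB_mem_iff Φ G q hc hq (by positivity)).1 (krnN_hit Φ G q hc hq k t hGt)
  obtain ⟨n, hn⟩ := hq.exists_dist_lt w (show (0:ℝ) < (1/2:ℝ)^(k+1) by positivity)
  have hex : ∃ n', t ∈ krnB Φ G q n' ((1/2:ℝ)^(k+1)) ∧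
      dist (q n') (q (krnN Φ G q k t)) ≤ 3 * (1/2:ℝ)^(k+1) := by
    refine ⟨n, (krnB_mem_iff Φ G q hc hq (by positivity)).2 ⟨w, hn.le, hww⟩, ?_⟩
    calc dist (q n) (q (krnN Φ G q k t)) ≤ dist (q n) w + dist w (q (krnN Φ G q k t)) :=
          dist_triangle _ _ _
      _ ≤ (1/2:ℝ)^(k+1) + (1/2:ℝ)^k := add_le_add (by rw [dist_comm]; exact hn.le) hwd
      _ = 3 * (1/2:ℝ)^(k+1) := by ring
  have := totFind_spec hex
  simpa [krnN] using this.2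

open scoped Classical in
def krnLim (t : α) : E :=
  if h : ∃ l, Tendsto (fun k => q (krnN Φ G q k t)) atTop (𝓝 l) then h.choose else q 0

lemma krnLim_tendsto [CompleteSpace E] (hc : ∀ t, Continuous (Φ t)) (hq : DenseRange q)
    (t : α) (hGt : Good Φ G t) :
    Tendsto (fun k => q (krnN Φ G q k t)) atTop (𝓝 (krnLim Φ G q t)) := by
  have hcauchy : CauchySeq fun k => q (krnN Φ G q k t) := by
    refine cauchySeq_of_le_geometric (1/2) (3/2) (by norm_num) fun k => ?_
    rw [dist_comm]
    calc dist (q (krnN Φ G q (k+1) t)) (q (krnN Φ G q k t)) ≤ 3 * (1/2:ℝ)^(k+1) :=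
          krnN_link Φ G q hc hq k t hGt
      _ = 3/2 * (1/2:ℝ)^k := by ring
  obtain ⟨l, hl⟩ := cauchySeq_tendsto_of_complete hcauchy
  have h : ∃ l, Tendsto (fun k => q (krnN Φ G q k t)) atTop (𝓝 l) := ⟨l, hl⟩
  unfold krnLim
  rw [dif_pos h]
  exact h.choose_spec

lemma krnLim_mem [CompleteSpace E] (hc : ∀ t, Continuous (Φ t)) (hq : DenseRange q)
    (t : α) (hGt : Good Φ G t) :
    Φ t (krnLim Φ G q t) = G t := by
  have hlim := krnLim_tendsto Φ G q hc hq t hGt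
  have hW : ∀ k : ℕ, ∃ w, dist w (q (krnN Φ G q k t)) ≤ (1/2:ℝ)^k ∧ Φ t w = G t := fun k =>
    (krnB_mem_iff Φ G q hc hq (by positivity)).1 (krnN_hit Φ G q hc hq k t hGt)
  choose W hW1 hW2 using hW
  have hWt : Tendsto W atTop (𝓝 (krnLim Φ G q t)) := by
    rw [tendsto_iff_dist_tendsto_zero]
    refine squeeze_zero (fun k => dist_nonneg) (g := fun k =>
      (1/2:ℝ)^k + dist (q (krnN Φ G q k t)) (krnLim Φ G q t)) (fun k => ?_) ?_
    · calc dist (W k) (krnLim Φ G q t)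
          ≤ dist (W k) (q (krnN Φ G q k t)) + dist (q (krnN Φ G q k t)) (krnLim Φ G q t) :=
            dist_triangle _ _ _
        _ ≤ (1/2:ℝ)^k + dist (q (krnN Φ G q k t)) (krnLim Φ G q t) :=
            add_le_add_left (hW1 k) _
    · have h1 : Tendsto (fun k : ℕ => (1/2:ℝ)^k) atTop (𝓝 0) :=
        tendsto_pow_atTop_nhds_zero_of_lt_one (by norm_num) (by norm_num)
      have h2 : Tendsto (fun k => dist (q (krnN Φ G q k t)) (krnLim Φ G q t)) atTop (𝓝 0) :=
        tendsto_iff_dist_tendsto_zero.1 hlim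
      simpa using h1.add h2
  have h1 : Tendsto (fun k => Φ t (W k)) atTop (𝓝 (Φ t (krnLim Φ G q t))) :=
    ((hc t).tendsto _).comp hWt
  have h2 : (fun k => Φ t (W k)) = fun _ => G t := funext hW2
  rw [h2] at h1
  exact tendsto_nhds_unique h1 tendsto_const_nhds

/-- **Measurable selection.** -/
theorem exists_aemeasurable_selection [CompleteSpace E] [SecondCountableTopology E]
    {μ : Measure α}
    (hc : ∀ t, Continuous (Φ t)) (hm : ∀ w, Measurable fun t => Φ t w)
    (hG : Measurable G) (hne : ∀ᵐ t ∂μ, ∃ w, Φ t w = G t) :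
    ∃ u' : α → E, AEMeasurable u' μ ∧ ∀ᵐ t ∂μ, Φ t (u' t) = G t := by
  have : Nonempty E := ⟨0⟩
  obtain ⟨q, hq⟩ := TopologicalSpace.exists_dense_seq E
  refine ⟨krnLim Φ G q, ?_, ?_⟩
  · refine aemeasurable_of_tendsto_metrizable_ae' (f := fun k t => q (krnN Φ G q k t))
      (fun k => (measurable_from_top.comp (krnN_meas Φ G q hm hG k)).aemeasurable) ?_
    filter_upwards [hne] with t ht using krnLim_tendsto Φ G q hc hq t ht
  · filter_upwards [hne] with t ht using krnLim_mem Φ G q hc hq t ht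


end Stmt5Sel


namespace Stmt5Gron

/-- A weak Gronwall inequality with `L¹` coefficient, proved by interval-doubling. -/
lemma gronwall (a φ : ℝ → ℝ) (b B : ℝ) (hb : 0 ≤ b) (hB : 0 ≤ B)
    (ha_nn : ∀ τ, 0 ≤ a τ)
    (haI : IntervalIntegrable a volume 0 b)
    (hφc : ContinuousOn φ (Icc 0 b))
    (hφnn : ∀ s ∈ Icc 0 b, 0 ≤ φ s)
    (hineq : ∀ s ∈ Icc 0 b, φ s ≤ B + ∫ τ in (0:ℝ)..s, a τ * φ τ)
    (n : ℕ) (hA : (∫ τ in (0:ℝ)..b, a τ) ≤ n / 2) :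
    ∀ s ∈ Icc 0 b, φ s ≤ B * 2 ^ n := by
  have huIcc : uIcc (0:ℝ) b = Icc 0 b := uIcc_of_le hb
  have haφI : IntervalIntegrable (fun τ => a τ * φ τ) volume 0 b :=
    haI.mul_continuousOn (by rwa [huIcc])
  have hsub : ∀ {u v : ℝ}, u ∈ Icc 0 b → v ∈ Icc 0 b →
      IntervalIntegrable (fun τ => a τ * φ τ) volume u v := by
    intro u v hu hv
    exact haφI.mono_set (uIcc_subset_uIcc (by rw [huIcc]; exact hu) (by rw [huIcc]; exact hv))
  have hasub : ∀ {u v : ℝ}, u ∈ Icc 0 b → v ∈ Icc 0 b → IntervalIntegrable a volume u v := by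
    intro u v hu hv
    exact haI.mono_set (uIcc_subset_uIcc (by rw [huIcc]; exact hu) (by rw [huIcc]; exact hv))
  set A : ℝ → ℝ := fun s => ∫ τ in (0:ℝ)..s, a τ with hAdef
  have hAcont : ContinuousOn A (Icc 0 b) := by
    have := intervalIntegral.continuousOn_primitive_interval (a := 0) (b := b) (μ := volume)
      (f := a) (by rw [huIcc]; exact (intervalIntegrable_iff_integrableOn_Icc_of_le hb).1 haI)
    rwa [huIcc] at this
  -- A is monotone on [0, b]
  have hAmono : ∀ {u v : ℝ}, u ∈ Icc 0 b → v ∈ Icc 0 b → u ≤ v → A u ≤ A v := by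
    intro u v hu hv huv
    have h1 : A u + ∫ τ in u..v, a τ = A v :=
      intervalIntegral.integral_add_adjacent_intervals (hasub (left_mem_Icc.2 hb) hu)
        (hasub hu hv)
    have h2 : 0 ≤ ∫ τ in u..v, a τ :=
      intervalIntegral.integral_nonneg huv fun τ _ => ha_nn τ
    linarith
  -- the key induction
  have key : ∀ n' : ℕ, ∀ s ∈ Icc 0 b, A s ≤ n' / 2 →
      B + (∫ τ in (0:ℝ)..s, a τ * φ τ) ≤ B * 2 ^ n' := by
    intro n'
    induction n' with
    | zero =>
      intro s hs hAs
      obtain ⟨C, hC⟩ := (isCompact_Icc (a := (0:ℝ)) (b := s)).exists_bound_of_continuousOn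
        (hφc.mono (Icc_subset_Icc le_rfl hs.2))
      set S : ℝ := max C 0 with hSdef
      have hφS : ∀ τ ∈ Icc 0 s, φ τ ≤ S := fun τ hτ =>
        le_trans (le_trans (le_abs_self _) (hC τ hτ)) (le_max_left _ _)
      have h1 : (∫ τ in (0:ℝ)..s, a τ * φ τ) ≤ ∫ τ in (0:ℝ)..s, a τ * S := by
        refine intervalIntegral.integral_mono_on hs.1 (hsub (left_mem_Icc.2 hb) hs)
          ((hasub (left_mem_Icc.2 hb) hs).mul_const S) fun τ hτ => ?_
        exact mul_le_mul_of_nonneg_left (hφS τ hτ) (ha_nn τ)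
      have h2 : (∫ τ in (0:ℝ)..s, a τ * S) = A s * S := intervalIntegral.integral_mul_const _ _
      have hA0 : A s = 0 := le_antisymm (by simpa using hAs)
        (intervalIntegral.integral_nonneg hs.1 fun τ _ => ha_nn τ)
      rw [h2, hA0] at h1
      simpa using by linarith
    | succ n' ih =>
      intro s hs hAs
      by_cases hcase : A s ≤ n' / 2
      · have := ih s hs hcase
        have h2 : B * 2 ^ n' ≤ B * 2 ^ (n' + 1) := by
          have : (2:ℝ) ^ n' ≤ 2 ^ (n' + 1) := by
            apply pow_le_pow_right₀ <;> norm_num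
          nlinarith
        linarith
      · push_neg at hcase
        set Sset : Set ℝ := {σ | σ ∈ Icc 0 s ∧ A σ ≤ n' / 2} with hSsetdef
        have hSne : Sset.Nonempty := by
          refine ⟨0, ⟨left_mem_Icc.2 hs.1, ?_⟩⟩
          simp only [hAdef, intervalIntegral.integral_same]
          positivity
        have hScl : IsClosed Sset := by
          have : Sset = Icc 0 s ∩ A ⁻¹' Iic (n' / 2) := rfl
          rw [this]
          exact ContinuousOn.preimage_isClosed_of_isClosed
            (hAcont.mono (Icc_subset_Icc le_rfl hs.2)) isClosed_Icc isClosed_Iic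
        have hScpt : IsCompact Sset :=
          isCompact_Icc.of_isClosed_subset hScl fun σ hσ => hσ.1
        set sstar : ℝ := sSup Sset with hsstardef
        have hsmem : sstar ∈ Sset := hScpt.sSup_mem hSne
        have hs1 : sstar ∈ Icc 0 s := hsmem.1
        have hs1b : sstar ∈ Icc 0 b := ⟨hs1.1, le_trans hs1.2 hs.2⟩
        have hs2 : A sstar ≤ n' / 2 := hsmem.2
        -- A sstar ≥ n'/2
        have hs3 : n' / 2 ≤ A sstar := by
          by_contra hlt
          push_neg at hlt
          have hss : sstar < s := by
            rcases lt_or_eq_of_le hs1.2 with h | h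
            · exact h
            · exact absurd (h ▸ hlt) (not_lt.2 hcase.le)
          have hev : ∀ᶠ σ in 𝓝[Icc 0 b] sstar, A σ < n' / 2 :=
            (hAcont sstar hs1b).eventually_lt_const hlt
          have hle : 𝓝[Ioc sstar s] sstar ≤ 𝓝[Icc 0 b] sstar :=
            nhdsWithin_mono sstar fun σ hσ => ⟨le_trans hs1.1 hσ.1.le, le_trans hσ.2 hs.2⟩
          have hev2 : ∀ᶠ σ in 𝓝[Ioc sstar s] sstar, A σ < n' / 2 := hev.filter_mono hle
          have hmem : ∀ᶠ σ in 𝓝[Ioc sstar s] sstar, σ ∈ Ioc sstar s := eventually_mem_nhdsWithin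
          haveI : (𝓝[Ioc sstar s] sstar).NeBot := by
            rw [nhdsWithin_Ioc_eq_nhdsGT hss]; infer_instance
          obtain ⟨σ, hσA, hσIoc⟩ := (hev2.and hmem).exists
          have hσS : σ ∈ Sset := ⟨⟨le_trans hs1.1 hσIoc.1.le, hσIoc.2⟩, hσA.le⟩
          have : σ ≤ sstar := le_csSup (hScpt.bddAbove) hσS
          exact absurd this (not_le.2 hσIoc.1)
        -- the tail integral of a is at most 1/2
        have hsplit : (∫ τ in sstar..s, a τ) ≤ 1 / 2 := by
          have h1 : A sstar + ∫ τ in sstar..s, a τ = A s :=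
            intervalIntegral.integral_add_adjacent_intervals
              (hasub (left_mem_Icc.2 hb) hs1b) (hasub hs1b hs)
          have : A s ≤ (n' + 1) / 2 := by exact_mod_cast hAs
          have h3 : A sstar = n' / 2 := le_antisymm hs2 hs3
          push_cast at this ⊢
          linarith
        -- maximum of φ on [sstar, s]
        obtain ⟨σ₀, hσ₀mem, hσ₀max'⟩ := isCompact_Icc.exists_isMaxOn
          (nonempty_Icc.2 hs1.2)
          (hφc.mono (Icc_subset_Icc hs1.1 hs.2))
        have hσ₀max : ∀ τ ∈ Icc sstar s, φ τ ≤ φ σ₀ := isMaxOn_iff.mp hσ₀max'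
        set S : ℝ := φ σ₀ with hSdef
        have hSnn : 0 ≤ S := hφnn σ₀ ⟨le_trans hs1.1 hσ₀mem.1, le_trans hσ₀mem.2 hs.2⟩
        have hwin : ∀ σ ∈ Icc sstar s, φ σ ≤ B * 2 ^ n' + 1 / 2 * S := by
          intro σ hσ
          have hσb : σ ∈ Icc 0 b :=
            ⟨le_trans hs1.1 hσ.1, le_trans hσ.2 hs.2⟩
          have h1 : φ σ ≤ B + ∫ τ in (0:ℝ)..σ, a τ * φ τ := hineq σ hσb
          have h2 : (∫ τ in (0:ℝ)..σ, a τ * φ τ) =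
              (∫ τ in (0:ℝ)..sstar, a τ * φ τ) + ∫ τ in sstar..σ, a τ * φ τ :=
            (intervalIntegral.integral_add_adjacent_intervals
              (hsub (left_mem_Icc.2 hb) hs1b) (hsub hs1b hσb)).symm
          have h3 : B + (∫ τ in (0:ℝ)..sstar, a τ * φ τ) ≤ B * 2 ^ n' := ih sstar hs1b hs2
          have h4 : (∫ τ in sstar..σ, a τ * φ τ) ≤ ∫ τ in sstar..σ, a τ * S := by
            refine intervalIntegral.integral_mono_on hσ.1 (hsub hs1b hσb)
              ((hasub hs1b hσb).mul_const S) fun τ hτ => ?_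
            exact mul_le_mul_of_nonneg_left
              (hσ₀max τ ⟨hτ.1, le_trans hτ.2 hσ.2⟩) (ha_nn τ)
          have h5 : (∫ τ in sstar..σ, a τ * S) = (∫ τ in sstar..σ, a τ) * S :=
            intervalIntegral.integral_mul_const _ _
          have h6 : (∫ τ in sstar..σ, a τ) ≤ 1 / 2 := by
            have hmono : (∫ τ in sstar..σ, a τ) ≤ ∫ τ in sstar..s, a τ := by
              have hadd : (∫ τ in sstar..σ, a τ) + ∫ τ in σ..s, a τ = ∫ τ in sstar..s, a τ :=
                intervalIntegral.integral_add_adjacent_intervals (hasub hs1b hσb)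
                  (hasub hσb hs)
              have : 0 ≤ ∫ τ in σ..s, a τ :=
                intervalIntegral.integral_nonneg hσ.2 fun τ _ => ha_nn τ
              linarith
            linarith
          have h7 : (∫ τ in sstar..σ, a τ) * S ≤ 1 / 2 * S :=
            mul_le_mul_of_nonneg_right h6 hSnn
          linarith
        have hSle : S ≤ B * 2 ^ (n' + 1) := by
          have := hwin σ₀ hσ₀mem
          rw [← hSdef] at this
          have h2 : (0:ℝ) < 2 ^ n' := by positivity
          have : S ≤ B * 2 ^ n' * 2 := by linarith
          calc S ≤ B * 2 ^ n' * 2 := this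
            _ = B * 2 ^ (n' + 1) := by ring
        -- conclude
        have h2 : (∫ τ in (0:ℝ)..s, a τ * φ τ) =
            (∫ τ in (0:ℝ)..sstar, a τ * φ τ) + ∫ τ in sstar..s, a τ * φ τ :=
          (intervalIntegral.integral_add_adjacent_intervals
            (hsub (left_mem_Icc.2 hb) hs1b) (hsub hs1b hs)).symm
        have h3 : B + (∫ τ in (0:ℝ)..sstar, a τ * φ τ) ≤ B * 2 ^ n' := ih sstar hs1b hs2
        have h4 : (∫ τ in sstar..s, a τ * φ τ) ≤ ∫ τ in sstar..s, a τ * S := by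
          refine intervalIntegral.integral_mono_on hs1.2 (hsub hs1b hs)
            ((hasub hs1b hs).mul_const S) fun τ hτ => ?_
          exact mul_le_mul_of_nonneg_left (hσ₀max τ hτ) (ha_nn τ)
        have h5 : (∫ τ in sstar..s, a τ * S) = (∫ τ in sstar..s, a τ) * S :=
          intervalIntegral.integral_mul_const _ _
        have h7 : (∫ τ in sstar..s, a τ) * S ≤ 1 / 2 * S :=
          mul_le_mul_of_nonneg_right hsplit hSnn
        have h8 : (2:ℝ) ^ (n' + 1) = 2 ^ n' * 2 := by ring
        nlinarith [hSle]
  intro s hs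
  have hineqs := hineq s hs
  have hkey := key n s hs (le_trans (hAmono hs (right_mem_Icc.2 hb) hs.2) hA)
  linarith

end Stmt5Gron


lemma stmt5_key {d m : ℕ}
    (f : EuclideanSpace ℝ (Fin d) → EuclideanSpace ℝ (Fin m) → EuclideanSpace ℝ (Fin d))
    (L : EuclideanSpace ℝ (Fin d) → EuclideanSpace ℝ (Fin m) → ℝ)
    (hfc : Continuous fun p : EuclideanSpace ℝ (Fin d) × EuclideanSpace ℝ (Fin m) => f p.1 p.2)
    (cf : ℝ) (hcf : 0 ≤ cf)
    (hfgr : ∀ x u, ‖f x u‖ ≤ cf * (1 + ‖u‖) * (1 + ‖x‖))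
    (hLc : Continuous fun p : EuclideanSpace ℝ (Fin d) × EuclideanSpace ℝ (Fin m) => L p.1 p.2)
    (β : ℝ → ℝ) (hβ : Monotone β)
    (hLle : ∀ x u, L x u ≤ β ‖x‖ * (1 + ‖u‖ ^ 2))
    (c₀ : ℝ) (hc₀ : ∀ x u, c₀ ≤ L x u)
    (xstar : EuclideanSpace ℝ (Fin d)) (ustar : EuclideanSpace ℝ (Fin m))
    (hstat : f xstar ustar = 0) (hc₀star : L xstar ustar = c₀)
    (T₁ CRv R' : ℝ) (hT₁ : 0 ≤ T₁) (hCRv : 0 ≤ CRv) (hR' : 0 ≤ R')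
    (x : EuclideanSpace ℝ (Fin d)) (hx : ‖x‖ ≤ R') (hxx : x ≠ xstar)
    (γ : ℝ → EuclideanSpace ℝ (Fin d)) (u : ℝ → EuclideanSpace ℝ (Fin m))
    (hpair : IsPair f 0 T₁ γ u) (hγ0 : γ 0 = x) (hγT : γ T₁ = xstar)
    (hucost : (∫ s in (0:ℝ)..T₁, ‖u s‖ ^ 2) ≤ CRv)
    (T : ℝ) (hT : T₁ ≤ T) :
    ∃ Γ W, IsPair f 0 T Γ W ∧ Γ 0 = x ∧
      IntervalIntegrable (fun s => L (Γ s) (W s)) volume 0 T ∧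
      (∫ s in (0:ℝ)..T, L (Γ s) (W s)) ≤
        |β ((1 + R') * 2 ^ (Nat.ceil (2 * (cf * (2 * T₁ + CRv)))))| * (3 * T₁ + 2 * CRv)
          + c₀ * (T - T₁) := by
  classical
  obtain ⟨heq, huint⟩ := hpair
  set g : ℝ → EuclideanSpace ℝ (Fin d) := fun τ => f (γ τ) (u τ) with hgdef
  have hT₁Icc : T₁ ∈ Icc (0:ℝ) T₁ := right_mem_Icc.2 hT₁
  -- g is interval integrable (else γ T₁ = x)
  have hgI : IntervalIntegrable g volume 0 T₁ := by
    by_contra hni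
    have h := heq T₁ hT₁Icc
    rw [intervalIntegral.integral_undef hni, hγ0, hγT, add_zero] at h
    exact hxx h.symm
  -- γ is continuous on [0, T₁]
  have hγcont : ContinuousOn γ (Icc 0 T₁) := by
    have hprim : ContinuousOn (fun s => γ 0 + ∫ τ in (0:ℝ)..s, g τ) (Icc 0 T₁) := by
      refine ContinuousOn.add continuousOn_const ?_
      have h := intervalIntegral.continuousOn_primitive_interval (a := 0) (b := T₁)
        (f := g) (μ := volume) ?_
      · rwa [uIcc_of_le hT₁] at h
      · rw [uIcc_of_le hT₁]
        exact (intervalIntegrable_iff_integrableOn_Icc_of_le hT₁).1 hgI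
    exact ContinuousOn.congr hprim heq
  set ν := volume.restrict (Ioc (0:ℝ) T₁) with hνdef
  -- measurable version of ‖u ·‖
  have hw2 : AEMeasurable (fun s => ‖u s‖ ^ 2) ν := huint.1.aemeasurable
  set ρ : ℝ → ℝ := fun s => Real.sqrt (hw2.mk _ s) with hρdef
  have hρmeas : Measurable ρ := hw2.measurable_mk.sqrt
  have hρnn : ∀ s, 0 ≤ ρ s := fun s => Real.sqrt_nonneg _
  have hρae : ∀ᵐ s ∂ν, ρ s = ‖u s‖ := by
    filter_upwards [hw2.ae_eq_mk] with s hs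
    rw [hρdef]
    simp only
    rw [← hs, Real.sqrt_sq (norm_nonneg _)]
  have hρsqae : (fun s => ρ s ^ 2) =ᵐ[ν] fun s => ‖u s‖ ^ 2 := by
    filter_upwards [hρae] with s hs; rw [hs]
  have hρsqI : IntegrableOn (fun s => ρ s ^ 2) (Ioc 0 T₁) volume :=
    huint.1.congr hρsqae.symm
  have hρI : IntegrableOn ρ (Ioc 0 T₁) volume := by
    have hconst1 : IntegrableOn (fun _ : ℝ => (1:ℝ)) (Ioc 0 T₁) volume :=
      integrableOn_const measure_Ioc_lt_top.ne
    have hadd : IntegrableOn (fun s => 1 + ρ s ^ 2) (Ioc 0 T₁) volume := hconst1.add hρsqI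
    refine hadd.mono' hρmeas.aestronglyMeasurable (ae_of_all _ fun s => ?_)
    rw [Real.norm_eq_abs, abs_of_nonneg (hρnn s)]
    nlinarith [hρnn s, sq_nonneg (ρ s - 1)]
  -- measurable versions of γ and g
  have hγae : AEMeasurable γ ν :=
    (hγcont.mono Ioc_subset_Icc_self).aemeasurable measurableSet_Ioc
  set γm := hγae.mk _ with hγmdef
  have hγmmeas : Measurable γm := hγae.measurable_mk
  have hγγm : ∀ᵐ s ∂ν, γ s = γm s := hγae.ae_eq_mk
  have hgae : AEMeasurable g ν := hgI.1.aemeasurable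
  set Gm := hgae.mk _ with hGmdef
  have hGmmeas : Measurable Gm := hgae.measurable_mk
  have hgGm : ∀ᵐ s ∂ν, g s = Gm s := hgae.ae_eq_mk
  -- measurable selection of a control
  set Φ : ℝ → EuclideanSpace ℝ (Fin m) → (EuclideanSpace ℝ (Fin d) × ℝ) :=
    fun t w => (f (γm t) w, max (‖w‖ - (ρ t + 1)) 0) with hΦdef
  have hΦc : ∀ t, Continuous (Φ t) := fun t => by
    refine Continuous.prodMk ?_ ?_
    · exact hfc.comp (continuous_const.prodMk continuous_id)
    · exact (continuous_norm.sub continuous_const).max continuous_const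
  have hΦm : ∀ w, Measurable fun t => Φ t w := fun w => by
    refine Measurable.prodMk ?_ ?_
    · exact hfc.measurable.comp (hγmmeas.prodMk measurable_const)
    · exact (measurable_const.sub (hρmeas.add measurable_const)).max measurable_const
  have hGf : Measurable fun t => ((Gm t, 0) : EuclideanSpace ℝ (Fin d) × ℝ) :=
    hGmmeas.prodMk measurable_const
  have hne : ∀ᵐ t ∂ν, ∃ w, Φ t w = (Gm t, 0) := by
    filter_upwards [hγγm, hgGm, hρae] with t h1 h2 h3
    refine ⟨u t, ?_⟩
    rw [hΦdef]
    simp only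
    rw [← h1, ← h2]
    have h4 : max (‖u t‖ - (ρ t + 1)) 0 = 0 := max_eq_right (by rw [h3]; linarith)
    rw [h4]
  obtain ⟨u', hu'meas, hu'prop⟩ :=
    Stmt5Sel.exists_aemeasurable_selection Φ (fun t => ((Gm t, 0) : _ × ℝ)) hΦc hΦm hGf hne
  have hu'f : ∀ᵐ t ∂ν, f (γ t) (u' t) = g t := by
    filter_upwards [hu'prop, hγγm, hgGm] with t h1 h2 h3
    have h4 := congrArg Prod.fst h1
    simp only [hΦdef] at h4
    rw [← h2, ← h3] at h4
    exact h4
  have hu'norm : ∀ᵐ t ∂ν, ‖u' t‖ ≤ ρ t + 1 := by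
    filter_upwards [hu'prop] with t h1
    have h4 := congrArg Prod.snd h1
    simp only [hΦdef] at h4
    by_contra hpos
    push_neg at hpos
    rw [max_eq_left (by linarith)] at h4
    linarith
  -- ### Gronwall bound for γ
  set aco : ℝ → ℝ := fun τ => cf * (1 + ρ τ) with hacodef
  have haddI : IntegrableOn (fun τ => (1:ℝ) + ρ τ) (Ioc 0 T₁) volume := by
    have hconst1 : IntegrableOn (fun _ : ℝ => (1:ℝ)) (Ioc 0 T₁) volume :=
      integrableOn_const measure_Ioc_lt_top.ne
    exact hconst1.add hρI
  have hacoI : IntervalIntegrable aco volume 0 T₁ := by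
    rw [intervalIntegrable_iff_integrableOn_Ioc_of_le hT₁]
    exact haddI.const_mul cf
  have haconn : ∀ τ, 0 ≤ aco τ := fun τ => mul_nonneg hcf (by linarith [hρnn τ])
  set B : ℝ := 1 + R' with hBdef
  set φfn : ℝ → ℝ := fun s => 1 + R' + ‖γ s - x‖ with hφdef
  have hφcont : ContinuousOn φfn (Icc 0 T₁) :=
    continuousOn_const.add (hγcont.sub continuousOn_const).norm
  have hφnn : ∀ s ∈ Icc 0 T₁, 0 ≤ φfn s := fun s _ => by
    have := norm_nonneg (γ s - x); simp only [hφdef]; linarith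
  have hBnn : 0 ≤ B := by rw [hBdef]; linarith
  have hmonoI : ∀ s ∈ Icc (0:ℝ) T₁, uIcc (0:ℝ) s ⊆ uIcc (0:ℝ) T₁ := fun s hs =>
    uIcc_subset_uIcc (by rw [uIcc_of_le hT₁]; exact left_mem_Icc.2 hT₁)
      (by rw [uIcc_of_le hT₁]; exact hs)
  have hineqG : ∀ s ∈ Icc 0 T₁, φfn s ≤ B + ∫ τ in (0:ℝ)..s, aco τ * φfn τ := by
    intro s hs
    have h1 : γ s - x = ∫ τ in (0:ℝ)..s, g τ := by
      rw [heq s hs, hγ0]; abel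
    have h2 : ‖γ s - x‖ ≤ ∫ τ in (0:ℝ)..s, ‖g τ‖ := by
      rw [h1]; exact intervalIntegral.norm_integral_le_integral_norm hs.1
    have hgs : IntervalIntegrable (fun τ => ‖g τ‖) volume 0 s :=
      (hgI.mono_set (hmonoI s hs)).norm
    have haφT : IntervalIntegrable (fun τ => aco τ * φfn τ) volume 0 T₁ :=
      hacoI.mul_continuousOn (by rwa [uIcc_of_le hT₁])
    have haφs : IntervalIntegrable (fun τ => aco τ * φfn τ) volume 0 s :=
      haφT.mono_set (hmonoI s hs)
    have h3 : (∫ τ in (0:ℝ)..s, ‖g τ‖) ≤ ∫ τ in (0:ℝ)..s, aco τ * φfn τ := by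
      refine intervalIntegral.integral_mono_ae_restrict hs.1 hgs haφs ?_
      rw [← Measure.restrict_congr_set Ioc_ae_eq_Icc]
      have hsub : Ioc (0:ℝ) s ⊆ Ioc 0 T₁ := Ioc_subset_Ioc_right hs.2
      refine ae_restrict_of_ae_restrict_of_subset hsub ?_
      filter_upwards [hρae] with τ hτ₁
      have hb1 : ‖g τ‖ ≤ cf * (1 + ‖u τ‖) * (1 + ‖γ τ‖) := hfgr _ _
      have hb2 : 1 + ‖γ τ‖ ≤ φfn τ := by
        have := norm_sub_norm_le (γ τ) x
        simp only [hφdef]; linarith [hx]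
      calc ‖g τ‖ ≤ cf * (1 + ‖u τ‖) * (1 + ‖γ τ‖) := hb1
        _ = aco τ * (1 + ‖γ τ‖) := by rw [hacodef]; simp only; rw [hτ₁]
        _ ≤ aco τ * φfn τ := mul_le_mul_of_nonneg_left hb2 (haconn τ)
    simp only [hφdef]
    have : (1:ℝ) + R' ≤ B := le_of_eq hBdef.symm
    linarith [h2, h3]
  set nG : ℕ := Nat.ceil (2 * (cf * (2 * T₁ + CRv))) with hnGdef
  have hintρsq : (∫ τ in (0:ℝ)..T₁, ρ τ ^ 2) ≤ CRv := by
    have hcongr : (∫ τ in (0:ℝ)..T₁, ρ τ ^ 2) = ∫ τ in (0:ℝ)..T₁, ‖u τ‖ ^ 2 := by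
      refine intervalIntegral.integral_congr_ae ?_
      rw [uIoc_of_le hT₁]
      exact (ae_restrict_iff' measurableSet_Ioc).1 hρsqae
    rw [hcongr]; exact hucost
  have hAbound : (∫ τ in (0:ℝ)..T₁, aco τ) ≤ (nG : ℝ) / 2 := by
    have hmajI : IntervalIntegrable (fun τ => cf * (2 + ρ τ ^ 2)) volume 0 T₁ := by
      rw [intervalIntegrable_iff_integrableOn_Ioc_of_le hT₁]
      have hconst2 : IntegrableOn (fun _ : ℝ => (2:ℝ)) (Ioc 0 T₁) volume :=
        integrableOn_const measure_Ioc_lt_top.ne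
      exact (hconst2.add hρsqI).const_mul cf
    have h1 : (∫ τ in (0:ℝ)..T₁, aco τ) ≤ ∫ τ in (0:ℝ)..T₁, cf * (2 + ρ τ ^ 2) := by
      refine intervalIntegral.integral_mono_on hT₁ hacoI hmajI fun τ _ => ?_
      have h0 := hρnn τ
      have : ρ τ ≤ 1 + ρ τ ^ 2 := by nlinarith [sq_nonneg (ρ τ - 1)]
      simp only [hacodef]
      nlinarith
    have hρsqII : IntervalIntegrable (fun τ => ρ τ ^ 2) volume 0 T₁ :=
      (intervalIntegrable_iff_integrableOn_Ioc_of_le hT₁).2 hρsqI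
    have h2 : (∫ τ in (0:ℝ)..T₁, cf * (2 + ρ τ ^ 2))
        = cf * (2 * T₁ + ∫ τ in (0:ℝ)..T₁, ρ τ ^ 2) := by
      rw [intervalIntegral.integral_const_mul]
      congr 1
      rw [intervalIntegral.integral_add intervalIntegrable_const hρsqII]
      simp [intervalIntegral.integral_const]
      ring
    have h3 : cf * (2 * T₁ + ∫ τ in (0:ℝ)..T₁, ρ τ ^ 2) ≤ cf * (2 * T₁ + CRv) :=
      mul_le_mul_of_nonneg_left (by linarith [hintρsq]) hcf
    have h4 : 2 * (cf * (2 * T₁ + CRv)) ≤ (nG : ℝ) := Nat.le_ceil _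
    linarith
  have hgron := Stmt5Gron.gronwall aco φfn T₁ B hT₁ hBnn haconn hacoI hφcont hφnn hineqG
    nG hAbound
  set M : ℝ := B * 2 ^ nG with hMdef
  have hγbd : ∀ s ∈ Icc 0 T₁, ‖γ s‖ ≤ M := by
    intro s hs
    have h1 := hgron s hs
    have h2 : ‖γ s‖ - ‖x‖ ≤ ‖γ s - x‖ := norm_sub_norm_le _ _
    simp only [hφdef] at h1
    rw [hMdef]
    linarith [hx]
  -- ### glued trajectory and control
  set Γ : ℝ → EuclideanSpace ℝ (Fin d) := fun s => if s ≤ T₁ then γ s else xstar with hΓdef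
  set W : ℝ → EuclideanSpace ℝ (Fin m) := fun s => if s ≤ T₁ then u' s else ustar with hWdef
  have hΓ0 : Γ 0 = x := by simp only [hΓdef, if_pos hT₁, hγ0]
  have hΓγ : ∀ s ∈ Ioc (0:ℝ) T₁, Γ s = γ s := fun s hs => by simp only [hΓdef, if_pos hs.2]
  have hWu' : ∀ s ∈ Ioc (0:ℝ) T₁, W s = u' s := fun s hs => by simp only [hWdef, if_pos hs.2]
  have hΓ2 : ∀ s, T₁ < s → Γ s = xstar := fun s hs => by
    simp only [hΓdef, if_neg (not_le.2 hs)]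
  have hW2 : ∀ s, T₁ < s → W s = ustar := fun s hs => by
    simp only [hWdef, if_neg (not_le.2 hs)]
  have hFWae : (fun τ => f (Γ τ) (W τ)) =ᵐ[ν] g := by
    filter_upwards [hu'f, ae_restrict_mem measurableSet_Ioc] with τ h1 h2
    rw [hΓγ τ h2, hWu' τ h2]
    exact h1
  have hFWI1 : IntervalIntegrable (fun τ => f (Γ τ) (W τ)) volume 0 T₁ := by
    rw [intervalIntegrable_iff_integrableOn_Ioc_of_le hT₁]
    exact (hgI.1).congr hFWae.symm
  have hIeq : ∀ s ∈ Icc (0:ℝ) T₁,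
      (∫ τ in (0:ℝ)..s, f (Γ τ) (W τ)) = ∫ τ in (0:ℝ)..s, g τ := by
    intro s hs
    refine intervalIntegral.integral_congr_ae ?_
    rw [uIoc_of_le hs.1]
    have h := ae_restrict_of_ae_restrict_of_subset (Ioc_subset_Ioc_right hs.2) hFWae
    exact (ae_restrict_iff' measurableSet_Ioc).1 h
  have hIT₁ : (∫ τ in (0:ℝ)..T₁, f (Γ τ) (W τ)) = xstar - x := by
    rw [hIeq T₁ hT₁Icc]
    have h2 := heq T₁ hT₁Icc
    rw [hγ0, hγT] at h2
    rw [h2]; abel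
  have hzero : ∀ s : ℝ, ∀ τ ∈ Ioc T₁ s, f (Γ τ) (W τ) = 0 := by
    intro s τ hτ
    rw [hΓ2 τ hτ.1, hW2 τ hτ.1]
    exact hstat
  have hFWI2 : ∀ s, T₁ ≤ s → IntervalIntegrable (fun τ => f (Γ τ) (W τ)) volume T₁ s := by
    intro s hs
    rw [intervalIntegrable_iff_integrableOn_Ioc_of_le hs]
    have h0 : IntegrableOn (fun _ : ℝ => (0 : EuclideanSpace ℝ (Fin d))) (Ioc T₁ s) volume :=
      integrableOn_zero
    refine h0.congr ?_
    refine (ae_restrict_iff' measurableSet_Ioc).2 (ae_of_all _ fun τ hτ => ?_)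
    exact (hzero s τ hτ).symm
  have hI2 : ∀ s, T₁ ≤ s → (∫ τ in T₁..s, f (Γ τ) (W τ)) = 0 := by
    intro s hs
    have h : (∫ τ in T₁..s, f (Γ τ) (W τ))
        = ∫ _ in T₁..s, (0 : EuclideanSpace ℝ (Fin d)) := by
      refine intervalIntegral.integral_congr_ae ?_
      rw [uIoc_of_le hs]
      exact ae_of_all _ (hzero s)
    rw [h, intervalIntegral.integral_zero]
  have hIsPairEq : ∀ s ∈ Icc (0:ℝ) T, Γ s = Γ 0 + ∫ τ in (0:ℝ)..s, f (Γ τ) (W τ) := by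
    intro s hsT
    by_cases hsT₁ : s ≤ T₁
    · have hsIcc : s ∈ Icc (0:ℝ) T₁ := ⟨hsT.1, hsT₁⟩
      have hΓs : Γ s = γ s := by simp only [hΓdef, if_pos hsT₁]
      rw [hΓs, hΓ0, hIeq s hsIcc, heq s hsIcc, hγ0]
    · push_neg at hsT₁
      have hΓs : Γ s = xstar := hΓ2 s hsT₁
      have hsplit : (∫ τ in (0:ℝ)..s, f (Γ τ) (W τ))
          = (∫ τ in (0:ℝ)..T₁, f (Γ τ) (W τ)) + ∫ τ in T₁..s, f (Γ τ) (W τ) :=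
        (intervalIntegral.integral_add_adjacent_intervals hFWI1 (hFWI2 s hsT₁.le)).symm
      rw [hΓs, hΓ0, hsplit, hIT₁, hI2 s hsT₁.le]
      abel
  -- square-integrability of W
  have hu'sqI : IntegrableOn (fun s => ‖u' s‖ ^ 2) (Ioc 0 T₁) volume := by
    have hconst1 : IntegrableOn (fun _ : ℝ => (1:ℝ)) (Ioc 0 T₁) volume :=
      integrableOn_const measure_Ioc_lt_top.ne
    have hmaj : IntegrableOn (fun s => (ρ s + 1) ^ 2) (Ioc 0 T₁) volume := by
      have hexp : (fun s : ℝ => (ρ s + 1) ^ 2) = fun s => ρ s ^ 2 + (2 * ρ s + 1) := by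
        funext s; ring
      have h2 : IntegrableOn (fun s => 2 * ρ s + 1) (Ioc 0 T₁) volume :=
        (hρI.const_mul 2).add hconst1
      rw [hexp]
      exact hρsqI.add h2
    have hmeas : AEStronglyMeasurable (fun s => ‖u' s‖ ^ 2) ν := by
      have h1 : AEMeasurable (fun s => ‖u' s‖) ν := hu'meas.norm
      exact (h1.pow_const 2).aestronglyMeasurable
    refine hmaj.mono' hmeas ?_
    filter_upwards [hu'norm] with s h1
    rw [Real.norm_eq_abs, abs_of_nonneg (by positivity)]
    have h0 := norm_nonneg (u' s)
    nlinarith [hρnn s]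
  have hWsq : IntervalIntegrable (fun s => ‖W s‖ ^ 2) volume 0 T := by
    have hWa : IntervalIntegrable (fun s => ‖W s‖ ^ 2) volume 0 T₁ := by
      rw [intervalIntegrable_iff_integrableOn_Ioc_of_le hT₁]
      refine hu'sqI.congr ?_
      refine (ae_restrict_iff' measurableSet_Ioc).2 (ae_of_all _ fun s hs => ?_)
      show ‖u' s‖ ^ 2 = ‖W s‖ ^ 2
      rw [hWu' s hs]
    have hWb : IntervalIntegrable (fun s => ‖W s‖ ^ 2) volume T₁ T := by
      rw [intervalIntegrable_iff_integrableOn_Ioc_of_le hT]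
      have h0 : IntegrableOn (fun _ : ℝ => ‖ustar‖ ^ 2) (Ioc T₁ T) volume :=
        integrableOn_const measure_Ioc_lt_top.ne
      refine h0.congr ?_
      refine (ae_restrict_iff' measurableSet_Ioc).2 (ae_of_all _ fun s hs => ?_)
      show ‖ustar‖ ^ 2 = ‖W s‖ ^ 2
      rw [hW2 s hs.1]
    exact hWa.trans hWb
  -- cost estimates
  set βM : ℝ := |β M| with hβMdef
  have hβMnn : 0 ≤ βM := abs_nonneg _
  have hLmeas1 : AEStronglyMeasurable (fun s => L (Γ s) (W s)) ν := by
    have h1 : AEMeasurable (fun s => ((γ s, u' s) :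
        EuclideanSpace ℝ (Fin d) × EuclideanSpace ℝ (Fin m))) ν := hγae.prodMk hu'meas
    have h2 : AEMeasurable (fun s => L (γ s) (u' s)) ν := hLc.measurable.comp_aemeasurable h1
    refine h2.aestronglyMeasurable.congr ?_
    filter_upwards [ae_restrict_mem measurableSet_Ioc] with s hs
    rw [hΓγ s hs, hWu' s hs]
  have hLboundae : ∀ᵐ s ∂ν, L (Γ s) (W s) ≤ βM * (3 + 2 * ρ s ^ 2) := by
    filter_upwards [hu'norm, ae_restrict_mem measurableSet_Ioc] with s h1 h2
    rw [hΓγ s h2, hWu' s h2]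
    have hs' : s ∈ Icc (0:ℝ) T₁ := Ioc_subset_Icc_self h2
    have hβle : β ‖γ s‖ ≤ βM := le_trans (hβ (hγbd s hs')) (le_abs_self _)
    have h3 : L (γ s) (u' s) ≤ β ‖γ s‖ * (1 + ‖u' s‖ ^ 2) := hLle _ _
    have h4 : (1:ℝ) + ‖u' s‖ ^ 2 ≤ 3 + 2 * ρ s ^ 2 := by
      nlinarith [hρnn s, norm_nonneg (u' s), sq_nonneg (ρ s - 1)]
    calc L (γ s) (u' s) ≤ β ‖γ s‖ * (1 + ‖u' s‖ ^ 2) := h3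
      _ ≤ βM * (1 + ‖u' s‖ ^ 2) := mul_le_mul_of_nonneg_right hβle (by positivity)
      _ ≤ βM * (3 + 2 * ρ s ^ 2) := mul_le_mul_of_nonneg_left h4 hβMnn
  have hmajLI : IntegrableOn (fun s => βM * (3 + 2 * ρ s ^ 2)) (Ioc 0 T₁) volume := by
    have hconst3 : IntegrableOn (fun _ : ℝ => (3:ℝ)) (Ioc 0 T₁) volume :=
      integrableOn_const measure_Ioc_lt_top.ne
    have h1 : IntegrableOn (fun s => (3:ℝ) + 2 * ρ s ^ 2) (Ioc 0 T₁) volume :=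
      hconst3.add (hρsqI.const_mul 2)
    exact h1.const_mul βM
  have hLI1 : IntervalIntegrable (fun s => L (Γ s) (W s)) volume 0 T₁ := by
    rw [intervalIntegrable_iff_integrableOn_Ioc_of_le hT₁]
    have hconstc : IntegrableOn (fun _ : ℝ => |c₀|) (Ioc 0 T₁) volume :=
      integrableOn_const measure_Ioc_lt_top.ne
    have hmaj2 : IntegrableOn (fun s => |c₀| + βM * (3 + 2 * ρ s ^ 2)) (Ioc 0 T₁) volume :=
      hconstc.add hmajLI
    refine hmaj2.mono' hLmeas1 ?_
    filter_upwards [hLboundae] with s h1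
    show ‖L (Γ s) (W s)‖ ≤ |c₀| + βM * (3 + 2 * ρ s ^ 2)
    rw [Real.norm_eq_abs, abs_le]
    have hlow := hc₀ (Γ s) (W s)
    have hpos : 0 ≤ βM * (3 + 2 * ρ s ^ 2) :=
      mul_nonneg hβMnn (by nlinarith [sq_nonneg (ρ s)])
    constructor
    · have := neg_abs_le c₀; linarith
    · linarith [abs_nonneg c₀]
  have hLI2 : IntervalIntegrable (fun s => L (Γ s) (W s)) volume T₁ T := by
    rw [intervalIntegrable_iff_integrableOn_Ioc_of_le hT]
    have h0 : IntegrableOn (fun _ : ℝ => c₀) (Ioc T₁ T) volume :=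
      integrableOn_const measure_Ioc_lt_top.ne
    refine h0.congr ?_
    refine (ae_restrict_iff' measurableSet_Ioc).2 (ae_of_all _ fun s hs => ?_)
    show c₀ = L (Γ s) (W s)
    rw [hΓ2 s hs.1, hW2 s hs.1, hc₀star]
  have hLI : IntervalIntegrable (fun s => L (Γ s) (W s)) volume 0 T := hLI1.trans hLI2
  have hρsqII : IntervalIntegrable (fun τ => ρ τ ^ 2) volume 0 T₁ :=
    (intervalIntegrable_iff_integrableOn_Ioc_of_le hT₁).2 hρsqI
  have hcost1 : (∫ s in (0:ℝ)..T₁, L (Γ s) (W s)) ≤ βM * (3 * T₁ + 2 * CRv) := by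
    have hmajII : IntervalIntegrable (fun s => βM * (3 + 2 * ρ s ^ 2)) volume 0 T₁ :=
      (intervalIntegrable_iff_integrableOn_Ioc_of_le hT₁).2 hmajLI
    have h1 : (∫ s in (0:ℝ)..T₁, L (Γ s) (W s))
        ≤ ∫ s in (0:ℝ)..T₁, βM * (3 + 2 * ρ s ^ 2) := by
      refine intervalIntegral.integral_mono_ae_restrict hT₁ hLI1 hmajII ?_
      rw [← Measure.restrict_congr_set Ioc_ae_eq_Icc]
      exact hLboundae
    have h2 : (∫ s in (0:ℝ)..T₁, βM * (3 + 2 * ρ s ^ 2))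
        = βM * (3 * T₁ + 2 * ∫ s in (0:ℝ)..T₁, ρ s ^ 2) := by
      rw [intervalIntegral.integral_const_mul]
      congr 1
      rw [intervalIntegral.integral_add intervalIntegrable_const (hρsqII.const_mul 2)]
      rw [intervalIntegral.integral_const_mul]
      simp [intervalIntegral.integral_const]
      ring
    have h3 : βM * (3 * T₁ + 2 * ∫ s in (0:ℝ)..T₁, ρ s ^ 2) ≤ βM * (3 * T₁ + 2 * CRv) :=
      mul_le_mul_of_nonneg_left (by linarith [hintρsq]) hβMnn
    linarith
  have hcost2 : (∫ s in T₁..T, L (Γ s) (W s)) = c₀ * (T - T₁) := by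
    have h1 : (∫ s in T₁..T, L (Γ s) (W s)) = ∫ _ in T₁..T, c₀ := by
      refine intervalIntegral.integral_congr_ae ?_
      rw [uIoc_of_le hT]
      refine ae_of_all _ fun s hs => ?_
      rw [hΓ2 s hs.1, hW2 s hs.1, hc₀star]
    rw [h1, intervalIntegral.integral_const, smul_eq_mul]
    ring
  have htot : (∫ s in (0:ℝ)..T, L (Γ s) (W s))
      = (∫ s in (0:ℝ)..T₁, L (Γ s) (W s)) + ∫ s in T₁..T, L (Γ s) (W s) :=
    (intervalIntegral.integral_add_adjacent_intervals hLI1 hLI2).symm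
  refine ⟨Γ, W, ⟨hIsPairEq, hWsq⟩, hΓ0, hLI, ?_⟩
  rw [htot, hcost2]
  linarith [hcost1]

/-- Existence of the critical constant: under (F0), (L1)–(L3) and
(LUGC) there exists `α(L) ∈ ℝ` such that `V_T/T → α(L)` as `T → ∞`, uniformly on
every closed ball. -/
theorem stmt_5 {d m : ℕ}
    (f : EuclideanSpace ℝ (Fin d) → EuclideanSpace ℝ (Fin m) → EuclideanSpace ℝ (Fin d))
    (L : EuclideanSpace ℝ (Fin d) → EuclideanSpace ℝ (Fin m) → ℝ)
    -- (F0)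
    (hfc : Continuous fun p : EuclideanSpace ℝ (Fin d) × EuclideanSpace ℝ (Fin m) =>
      f p.1 p.2)
    (cf : ℝ) (hcf : 0 ≤ cf)
    (hflip : ∀ x y u, ‖f x u - f y u‖ ≤ cf * (1 + ‖u‖) * ‖x - y‖)
    (hfgr : ∀ x u, ‖f x u‖ ≤ cf * (1 + ‖u‖) * (1 + ‖x‖))
    -- (L1)
    (hLC2 : ContDiff ℝ 2 fun p : EuclideanSpace ℝ (Fin d) × EuclideanSpace ℝ (Fin m) =>
      L p.1 p.2)
    (β : ℝ → ℝ) (hβ : Monotone β) (ℓ₁ : ℝ) (hℓ₁ : 0 < ℓ₁)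
    (hLle : ∀ x u, L x u ≤ β ‖x‖ * (1 + ‖u‖ ^ 2))
    (hDxL : ∀ x u, ‖fderiv ℝ (fun y => L y u) x‖ ≤ ℓ₁ * (1 + ‖u‖ ^ 2))
    (hconv : ∀ x u (v : EuclideanSpace ℝ (Fin m)),
      (1 / ℓ₁) * ‖v‖ ^ 2 ≤ iteratedFDeriv ℝ 2 (L x) u ![v, v])
    -- (L2)
    (ustar : EuclideanSpace ℝ (Fin m))
    (hL2 : ∀ x u, L x ustar ≤ L x u)
    -- (L3)
    (K : Set (EuclideanSpace ℝ (Fin d))) (hK : IsCompact K)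
    (Θ : ℝ) (hΘ : 0 < Θ)
    (xstar : EuclideanSpace ℝ (Fin d)) (hxK : xstar ∈ K)
    (hxmin : ∀ x ∈ K, L xstar ustar ≤ L x ustar)
    (hgap : ∀ x ∉ K, Θ + L xstar ustar ≤ L x ustar)
    (hstat : f xstar ustar = 0)
    -- (LUGC)
    (TR CR : ℝ → ℝ) (hTR : ∀ R, 0 ≤ R → 0 ≤ TR R)
    (hLUGC : ∀ R, 0 ≤ R → ∀ x y : EuclideanSpace ℝ (Fin d), ‖x‖ ≤ R → ‖y‖ ≤ R →
      ∃ γ u, IsPair f 0 (TR R) γ u ∧ γ 0 = x ∧ γ (TR R) = y ∧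
        (∫ s in (0:ℝ)..TR R, ‖u s‖ ^ 2) ≤ CR R) :
    ∃ α : ℝ, ∀ R, 0 < R → ∀ ε, 0 < ε → ∃ T₀, ∀ T, T₀ ≤ T →
      ∀ x : EuclideanSpace ℝ (Fin d), ‖x‖ ≤ R →
        |valueFn f L T x / T - α| ≤ ε := by
  classical
  have hLc : Continuous fun p : EuclideanSpace ℝ (Fin d) × EuclideanSpace ℝ (Fin m) =>
      L p.1 p.2 := hLC2.continuous
  set c₀ : ℝ := L xstar ustar with hc₀def
  have hc₀low : ∀ y v, c₀ ≤ L y v := by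
    intro y v
    refine le_trans ?_ (hL2 y v)
    by_cases hy : y ∈ K
    · exact hxmin y hy
    · have := hgap y hy; linarith
  refine ⟨c₀, ?_⟩
  intro R hR ε hε
  set R' : ℝ := max R ‖xstar‖ with hR'def
  have hR'0 : 0 ≤ R' := le_trans (norm_nonneg xstar) (le_max_right _ _)
  set T₁ : ℝ := TR R' with hT₁def
  have hT₁0 : 0 ≤ T₁ := hTR R' hR'0
  set CRv : ℝ := max (CR R') 0 with hCRvdef
  have hCRv0 : 0 ≤ CRv := le_max_right _ _
  set Dleg : ℝ :=
    |β ((1 + R') * 2 ^ (Nat.ceil (2 * (cf * (2 * T₁ + CRv)))))| * (3 * T₁ + 2 * CRv)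
    with hDlegdef
  have hDleg0 : 0 ≤ Dleg := mul_nonneg (abs_nonneg _) (by linarith)
  set D : ℝ := Dleg + |c₀| * T₁ with hDdef
  have hD0 : 0 ≤ D := add_nonneg hDleg0 (mul_nonneg (abs_nonneg _) hT₁0)
  refine ⟨max (max T₁ 1) (D / ε), ?_⟩
  intro T hTle x hx
  have hT1 : T₁ ≤ T := le_trans (le_trans (le_max_left _ _) (le_max_left _ _)) hTle
  have h1T : (1:ℝ) ≤ T := le_trans (le_trans (le_max_right T₁ 1) (le_max_left _ _)) hTle
  have hTpos : (0:ℝ) < T := by linarith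
  have hDT : D / ε ≤ T := le_trans (le_max_right _ _) hTle
  set S : Set ℝ := {c : ℝ | ∃ γ u, IsPair f 0 T γ u ∧ γ 0 = x ∧
    IntervalIntegrable (fun s => L (γ s) (u s)) volume 0 T ∧
    c = ∫ s in (0:ℝ)..T, L (γ s) (u s)} with hSdef
  have hVS : valueFn f L T x = sInf S := by rw [hSdef]; rfl
  -- a member with controlled cost
  have hmem : ∃ c ∈ S, c ≤ c₀ * T + D := by
    by_cases hxx : x = xstar
    · refine ⟨∫ s in (0:ℝ)..T, L ((fun _ : ℝ => xstar) s) ((fun _ : ℝ => ustar) s),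
        ⟨fun _ => xstar, fun _ => ustar, ⟨?_, ?_⟩, hxx.symm, ?_, rfl⟩, ?_⟩
      · intro s _
        simp [hstat]
      · exact intervalIntegrable_const
      · exact intervalIntegrable_const
      · simp only [intervalIntegral.integral_const, smul_eq_mul, ← hc₀def]
        nlinarith [hD0]
    · obtain ⟨γ, u, hpair, hγ0, hγT, hucost⟩ :=
        hLUGC R' hR'0 x xstar (le_trans hx (le_max_left _ _)) (le_max_right _ _)
      have hucost' : (∫ s in (0:ℝ)..T₁, ‖u s‖ ^ 2) ≤ CRv :=
        le_trans hucost (le_max_left _ _)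
      obtain ⟨Γ, W, hp, h0, hint, hbd⟩ := stmt5_key f L hfc cf hcf hfgr hLc β hβ hLle c₀
        hc₀low xstar ustar hstat hc₀def.symm T₁ CRv R' hT₁0 hCRv0 hR'0 x
        (le_trans hx (le_max_left _ _)) hxx γ u hpair hγ0 hγT hucost' T hT1
      refine ⟨_, ⟨Γ, W, hp, h0, hint, rfl⟩, ?_⟩
      have h2 : c₀ * (T - T₁) ≤ c₀ * T + |c₀| * T₁ := by
        have h3 : (-c₀) * T₁ ≤ |c₀| * T₁ := mul_le_mul_of_nonneg_right (neg_le_abs c₀) hT₁0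
        nlinarith
      rw [hDdef]
      linarith [hbd]
  -- lower bound
  have hlow : ∀ c ∈ S, c₀ * T ≤ c := by
    rintro c ⟨γ, u, hpair, hγ0, hint, rfl⟩
    have h1 : (∫ s in (0:ℝ)..T, c₀) ≤ ∫ s in (0:ℝ)..T, L (γ s) (u s) :=
      intervalIntegral.integral_mono_on hTpos.le intervalIntegrable_const hint
        fun s _ => hc₀low _ _
    rw [intervalIntegral.integral_const, smul_eq_mul] at h1
    nlinarith
  obtain ⟨cmem, hcmemS, hcmem⟩ := hmem
  have hSne : S.Nonempty := ⟨cmem, hcmemS⟩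
  have hbdd : BddBelow S := ⟨c₀ * T, fun c hc => hlow c hc⟩
  have hV1 : valueFn f L T x ≤ c₀ * T + D := by
    rw [hVS]; exact le_trans (csInf_le hbdd hcmemS) hcmem
  have hV2 : c₀ * T ≤ valueFn f L T x := by
    rw [hVS]; exact le_csInf hSne hlow
  have hDe : D ≤ T * ε := (div_le_iff₀ hε).1 hDT
  rw [abs_le]
  constructor
  · have h1 : c₀ ≤ valueFn f L T x / T := by
      rw [le_div_iff₀ hTpos]; exact hV2
    linarith
  · have h1 : valueFn f L T x / T ≤ c₀ + ε := by
      rw [div_le_iff₀ hTpos]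
      nlinarith
    linarith


end
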